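/- arXiv:2202.07710 — 3 statements merged into one kernel-verified Lean document; each statement's English description precedes it below -/
import Mathlib

section
/- (Proposition 1) Consider a single agent that queries d bins, chosen independently and uniformly at random (with replacement) from a set of n bins (n ≥ 1), of which a fixed subset S of k bins is available (k ≥ 1). If the agent finds at least one available bin, it selects one bin uniformly at random from Q, the set of available bins it found. Then for every available bin j ∈ S, the probability that the agent selects bin j equals (1/k) · Pr(Q ≠ ∅) = (1/k) · (1 - ((n-k)/n)^d). Equivalently, conditioned on the agent being potentially happy, it selects each fixed available bin j with probability exactly 1/k. Formally: (1/n^d) · Σ over functions g : Fin d → Fin n with j ∈ Q(g) of 1/|Q(g)| equals (1/k) · (1 - ((n-k)/n)^d). -/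
/-!
A transposition of two available bins, applied to the queries, permutes the query functions
and preserves `|Q(g)|`, so every available bin is selected with the same probability.
Summing over the available bins, each `g` with `Q(g) ≠ ∅` contributes exactly
`|Q(g)| · 1/|Q(g)| = 1`, and the `g` with `Q(g) = ∅` are the `(n - k) ^ d` maps into the
unavailable bins; hence `k` times the selection probability of `j` is `1 - ((n - k) / n) ^ d`.
-/

open Finset

lemma Equiv.swap_apply_mem_iff {β : Type*} [DecidableEq β] {S : Finset β} {j j' : β}
    (hj : j ∈ S) (hj' : j' ∈ S) (x : β) : Equiv.swap j j' x ∈ S ↔ x ∈ S := by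
  rcases eq_or_ne x j with rfl | hxj
  · simp [hj, hj']
  rcases eq_or_ne x j' with rfl | hxj'
  · simp [hj, hj']
  · rw [Equiv.swap_apply_of_ne_of_ne hxj hxj']

lemma Finset.image_comp_inter_eq_map {α β : Type*} [Fintype α] [DecidableEq β] {S : Finset β}
    {σ : Equiv.Perm β} (hσ : ∀ x, σ x ∈ S ↔ x ∈ S) (g : α → β) :
    image (σ ∘ g) univ ∩ S = (image g univ ∩ S).map σ.toEmbedding := by
  ext x
  obtain ⟨y, rfl⟩ := σ.surjective x
  simp [hσ]

section

variable (α : Type*) {β : Type*} [Fintype α] [DecidableEq α] [Fintype β] [DecidableEq β]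

/-- `Fintype.card β ^ Fintype.card α` times the probability that bin `j` is selected. -/
noncomputable def selectionMass (S : Finset β) (j : β) : ℝ :=
  ∑ g ∈ univ.filter (fun g : α → β => j ∈ image g univ ∩ S), 1 / (#(image g univ ∩ S) : ℝ)

variable {α}

lemma selectionMass_apply_perm {S : Finset β} {σ : Equiv.Perm β} (hσ : ∀ x, σ x ∈ S ↔ x ∈ S)
    (j : β) : selectionMass α S (σ j) = selectionMass α S j := by
  refine (sum_nbij' (fun g => σ ∘ g) (fun g => σ.symm ∘ g) ?_ ?_ ?_ ?_ ?_).symm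
  · intro g hg
    simpa [hσ] using hg
  · intro g hg
    simpa [hσ, Equiv.symm_apply_eq] using hg
  · intro g _; ext; simp
  · intro g _; ext; simp
  · intro g _
    rw [image_comp_inter_eq_map hσ, card_map]

lemma selectionMass_eq_of_mem {S : Finset β} {j j' : β} (hj : j ∈ S) (hj' : j' ∈ S) :
    selectionMass α S j' = selectionMass α S j := by
  simpa using selectionMass_apply_perm (α := α) (Equiv.swap_apply_mem_iff hj hj') j

lemma sum_selectionMass (S : Finset β) :
    ∑ j ∈ S, selectionMass α S j = #(univ.filter fun g : α → β => (image g univ ∩ S).Nonempty) := by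
  simp only [selectionMass, sum_filter]
  rw [sum_comm, natCast_card_filter]
  refine sum_congr rfl fun g _ => ?_
  rw [sum_ite_mem, inter_eq_right.2 inter_subset_right, sum_const, nsmul_eq_mul]
  split_ifs with h
  · exact mul_one_div_cancel (by exact_mod_cast h.card_pos.ne')
  · simp [not_nonempty_iff_eq_empty.1 h]

lemma card_filter_image_inter_nonempty (S : Finset β) :
    #(univ.filter fun g : α → β => (image g univ ∩ S).Nonempty)
      = Fintype.card β ^ Fintype.card α - (Fintype.card β - #S) ^ Fintype.card α := by
  have : univ.filter (fun g : α → β => (image g univ ∩ S).Nonempty)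
      = (Fintype.piFinset fun _ => Sᶜ)ᶜ := by
    ext g
    simp [Finset.Nonempty, Fintype.mem_piFinset]
  rw [this, card_compl, Fintype.card_piFinset, prod_const, card_compl, Fintype.card_fun, card_univ]

lemma selectionMass_eq {S : Finset β} {j : β} (hj : j ∈ S) :
    selectionMass α S j
      = ((Fintype.card β : ℝ) ^ Fintype.card α - (Fintype.card β - #S : ℝ) ^ Fintype.card α) / #S := by
  have hS : #S ≤ Fintype.card β := card_le_univ S
  rw [eq_div_iff (by exact_mod_cast (card_pos.2 ⟨j, hj⟩).ne'), mul_comm, ← nsmul_eq_mul, ← sum_const,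
    ← sum_congr rfl fun j' hj' => selectionMass_eq_of_mem hj hj', sum_selectionMass,
    card_filter_image_inter_nonempty, Nat.cast_sub (Nat.pow_le_pow_left (Nat.sub_le _ _) _)]
  simp [hS]

end

theorem stmt3_general (n d k : ℕ)
    (S : Finset (Fin n)) (hS : S.card = k) (j : Fin n) (hj : j ∈ S) :
    (1 / (n : ℝ) ^ d) *
        ∑ g ∈ Finset.univ.filter
            (fun g : Fin d → Fin n => j ∈ Finset.image g Finset.univ ∩ S),
          (1 / ((Finset.image g Finset.univ ∩ S).card : ℝ))
      = (1 / (k : ℝ)) * (1 - (((n : ℝ) - (k : ℝ)) / (n : ℝ)) ^ d) := by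
  have hn0 : (n : ℝ) ≠ 0 := by exact_mod_cast (Fin.pos j).ne'
  change _ * selectionMass (Fin d) S j = _
  rw [selectionMass_eq hj, Fintype.card_fin, Fintype.card_fin, hS, div_pow]
  field_simp

/-- Proposition 1: A single agent queries `d` bins i.i.d. uniformly
from `n` bins (a uniformly random `g : Fin d → Fin n`); `S` with `|S| = k ≥ 1`
is the set of available bins, `Q(g) = (range g) ∩ S`.  If `Q(g) ≠ ∅`, the agent
selects a bin uniformly at random from `Q(g)`.  For every available bin `j ∈ S`,
the probability that the agent selects `j`, i.e.
`(1/n^d) · Σ_{g : j ∈ Q(g)} 1/|Q(g)|`, equals `(1/k) · (1 - ((n-k)/n)^d)`. -/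
theorem stmt3 (n d k : ℕ) (hn : 1 ≤ n) (hk : 1 ≤ k)
    (S : Finset (Fin n)) (hS : S.card = k) (j : Fin n) (hj : j ∈ S) :
    (1 / (n : ℝ) ^ d) *
        ∑ g ∈ Finset.univ.filter
            (fun g : Fin d → Fin n => j ∈ Finset.image g Finset.univ ∩ S),
          (1 / ((Finset.image g Finset.univ ∩ S).card : ℝ))
      = (1 / (k : ℝ)) * (1 - (((n : ℝ) - (k : ℝ)) / (n : ℝ)) ^ d) :=
  stmt3_general n d k S hS j hj
end

section
/- Consider s agents acting independently, where each agent queries d bins chosen independently and uniformly at random (with replacement) from a set of n bins (n ≥ 1), of which a fixed subset S of k bins is available (k ≥ 1). Each agent that finds at least one available bin (a potentially happy agent) selects one bin uniformly at random from the set Q of available bins it found; all query samples and all selections are mutually independent. Let H be the number of bins of S selected by at least one agent (equivalently, the number of happy agents, since each selected bin accommodates exactly one of the agents that selected it). Then E[H] = k · Σ_{f=1}^{s} [1 - ((k-1)/k)^f] · C(s, f) · σ^f · (1-σ)^{s-f}, where σ = 1 - ((n-k)/n)^d. -/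
open Finset

/-- The set `Q` of available bins found by an agent whose queries are `g`:
`Q(g) = (range g) ∩ S`. -/
def foundBins {n d : ℕ} (S : Finset (Fin n)) (g : Fin d → Fin n) : Finset (Fin n) :=
  Finset.image g Finset.univ ∩ S

/-- The expected number of happy agents `E[H]`: the queries of the `s` agents form
a uniformly random `G : Fin s → (Fin d → Fin n)`; given `G`, each potentially
happy agent `i` (one with `Q_i = foundBins S (G i) ≠ ∅`) independently selects a
bin uniformly at random from `Q_i`, so agent `i` selects bin `j` with probability
`1/|Q_i|` if `j ∈ Q_i` and `0` otherwise, and by independence of the selections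
`H`, the number of bins of `S` selected by at least one agent, has conditional
expectation `Σ_{j ∈ S} (1 - Π_i (1 - Pr(i selects j)))` given `G`. -/
noncomputable def expectedHappy (n d s : ℕ) (S : Finset (Fin n)) : ℝ :=
  (∑ G : Fin s → Fin d → Fin n,
      ∑ j ∈ S,
        (1 - ∏ i : Fin s,
          (1 - (if j ∈ foundBins S (G i)
                then 1 / ((foundBins S (G i)).card : ℝ) else 0))))
    / ((n : ℝ) ^ d) ^ s

noncomputable def selProb {n d : ℕ} (S : Finset (Fin n)) (j : Fin n) (g : Fin d → Fin n) : ℝ :=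
  if j ∈ foundBins S g then 1 / ((foundBins S g).card : ℝ) else 0

lemma foundBins_subset {n d : ℕ} (S : Finset (Fin n)) (g : Fin d → Fin n) :
    foundBins S g ⊆ S := inter_subset_right

lemma sum_selProb (n d : ℕ) (S : Finset (Fin n)) (g : Fin d → Fin n) :
    ∑ j ∈ S, selProb S j g = if (foundBins S g).Nonempty then 1 else 0 := by
  unfold selProb
  rw [Finset.sum_ite_mem, Finset.inter_eq_right.mpr (foundBins_subset S g)]
  rcases (foundBins S g).eq_empty_or_nonempty with h | h
  · simp [h]
  · rw [if_pos h, Finset.sum_const, nsmul_eq_mul]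
    field_simp [Finset.card_ne_zero_of_mem h.choose_spec]

-- count empties
lemma count_empty (n d : ℕ) (S : Finset (Fin n)) :
    (Finset.univ.filter fun g : Fin d → Fin n => foundBins S g = ∅).card
      = (n - S.card) ^ d := by
  have : (Finset.univ.filter fun g : Fin d → Fin n => foundBins S g = ∅)
      = Fintype.piFinset (fun _ : Fin d => Sᶜ) := by
    ext g
    simp [foundBins, Finset.eq_empty_iff_forall_notMem, Fintype.mem_piFinset]
  rw [this, Fintype.card_piFinset]
  simp [Finset.card_compl]

lemma sum_indicator (n d : ℕ) (S : Finset (Fin n)) :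
    ∑ g : Fin d → Fin n, (if (foundBins S g).Nonempty then (1:ℝ) else 0)
      = (n:ℝ)^d - ((n - S.card : ℕ) : ℝ)^d := by
  rw [Finset.sum_boole]
  have h1 : (Finset.univ.filter fun g : Fin d → Fin n => (foundBins S g).Nonempty).card
      + (Finset.univ.filter fun g : Fin d → Fin n => foundBins S g = ∅).card
      = (n:ℕ)^d := by
    have he : (Finset.univ.filter fun g : Fin d → Fin n => foundBins S g = ∅)
        = (Finset.univ.filter fun g : Fin d → Fin n => ¬ (foundBins S g).Nonempty) := by
      simp [Finset.not_nonempty_iff_eq_empty]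
    rw [he, Finset.card_filter_add_card_filter_not
      (p := fun g : Fin d → Fin n => (foundBins S g).Nonempty)]
    simp [Fintype.card_fun]
  rw [count_empty] at h1
  have := congrArg (fun m : ℕ => (m : ℝ)) h1
  push_cast at this ⊢
  linarith

lemma swap_image (n : ℕ) (S : Finset (Fin n)) {j j' : Fin n} (hj : j ∈ S) (hj' : j' ∈ S) :
    S.image (Equiv.swap j j') = S := by
  ext x
  simp only [Finset.mem_image]
  constructor
  · rintro ⟨y, hy, rfl⟩
    rcases eq_or_ne y j with rfl | h1
    · simpa [Equiv.swap_apply_left]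
    rcases eq_or_ne y j' with rfl | h2
    · simpa [Equiv.swap_apply_right]
    · simpa [Equiv.swap_apply_of_ne_of_ne h1 h2]
  · intro hx
    exact ⟨Equiv.swap j j' x, by
      rcases eq_or_ne x j with rfl | h1
      · simpa [Equiv.swap_apply_left]
      rcases eq_or_ne x j' with rfl | h2
      · simpa [Equiv.swap_apply_right]
      · simpa [Equiv.swap_apply_of_ne_of_ne h1 h2], Equiv.swap_apply_self _ _ _⟩

lemma foundBins_swap (n d : ℕ) (S : Finset (Fin n)) {j j' : Fin n} (hj : j ∈ S) (hj' : j' ∈ S)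
    (g : Fin d → Fin n) :
    foundBins S ((Equiv.swap j j') ∘ g) = (foundBins S g).image (Equiv.swap j j') := by
  unfold foundBins
  rw [Finset.image_inter _ _ (Equiv.injective _), swap_image n S hj hj',
    ← Finset.image_image]

lemma sum_selProb_symm (n d : ℕ) (S : Finset (Fin n)) {j j' : Fin n}
    (hj : j ∈ S) (hj' : j' ∈ S) :
    ∑ g : Fin d → Fin n, selProb S j g = ∑ g : Fin d → Fin n, selProb S j' g := by
  refine Fintype.sum_equiv (Equiv.piCongrRight fun _ => Equiv.swap j j') _ _ fun g => ?_
  have he : (Equiv.piCongrRight fun _ : Fin d => Equiv.swap j j') g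
      = (Equiv.swap j j') ∘ g := rfl
  unfold selProb
  rw [he, foundBins_swap n d S hj hj']
  rw [Finset.card_image_of_injective _ (Equiv.injective _)]
  have hmem : j' ∈ (foundBins S g).image (Equiv.swap j j') ↔ j ∈ foundBins S g := by
    rw [Finset.mem_image]
    constructor
    · rintro ⟨y, hy, hxy⟩
      have hy' : y = j := by
        have h2 := congrArg (Equiv.swap j j') hxy
        rwa [Equiv.swap_apply_self, Equiv.swap_apply_right] at h2
      rwa [hy'] at hy
    · intro h
      exact ⟨j, h, Equiv.swap_apply_left _ _⟩
  by_cases h : j ∈ foundBins S g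
  · rw [if_pos (hmem.mpr h), if_pos h]
  · rw [if_neg h, if_neg (fun hc => h (hmem.mp hc))]

lemma sum_selProb_val (n d k : ℕ) (hk : 1 ≤ k) (S : Finset (Fin n)) (hS : S.card = k)
    {j : Fin n} (hj : j ∈ S) :
    ∑ g : Fin d → Fin n, selProb S j g = ((n:ℝ)^d - ((n - k : ℕ):ℝ)^d) / k := by
  have hsum : ∑ j' ∈ S, ∑ g : Fin d → Fin n, selProb S j' g
      = (n:ℝ)^d - ((n - k : ℕ):ℝ)^d := by
    rw [Finset.sum_comm]
    have : ∀ g ∈ (Finset.univ : Finset (Fin d → Fin n)),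
        ∑ j' ∈ S, selProb S j' g = if (foundBins S g).Nonempty then (1:ℝ) else 0 :=
      fun g _ => sum_selProb n d S g
    rw [Finset.sum_congr rfl this, sum_indicator, hS]
  have hconst : ∀ j' ∈ S, ∑ g : Fin d → Fin n, selProb S j' g
      = ∑ g : Fin d → Fin n, selProb S j g :=
    fun j' hj' => sum_selProb_symm n d S hj' hj
  rw [Finset.sum_congr rfl hconst, Finset.sum_const, hS, nsmul_eq_mul] at hsum
  have hk0 : (k:ℝ) ≠ 0 := by positivity
  field_simp
  linarith [hsum]

lemma binom_id (x r : ℝ) (s : ℕ) :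
    ∑ f ∈ Finset.Icc 1 s, (1 - r^f) * (s.choose f : ℝ) * x^f * (1-x)^(s-f)
      = 1 - (r*x + (1-x))^s := by
  have h0 : Finset.Icc 1 s = (Finset.range (s+1)).erase 0 := by
    ext f
    simp only [Finset.mem_Icc, Finset.mem_erase, Finset.mem_range]
    omega
  rw [h0, Finset.sum_erase_eq_sub (by simp)]
  have ht : ∀ f ∈ Finset.range (s+1),
      (1 - r^f) * (s.choose f : ℝ) * x^f * (1-x)^(s-f)
        = x^f * (1-x)^(s-f) * (s.choose f : ℝ)
          - (r*x)^f * (1-x)^(s-f) * (s.choose f : ℝ) := by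
    intro f _
    rw [mul_pow]; ring
  rw [Finset.sum_congr rfl ht, Finset.sum_sub_distrib, ← add_pow, ← add_pow]
  have : x + (1 - x) = 1 := by ring
  rw [this, one_pow]
  have : r * x + (1 - x) + ((1:ℝ) - 1^0) * (s.choose 0 : ℝ) * x^0 * (1-x)^(s-0) = r*x + (1-x) := by
    simp
  simp


/-- with `|S| = k ≥ 1` available bins among `n ≥ 1` bins, and `s`
independent agents each querying `d` bins i.i.d. uniformly,
`E[H] = k · Σ_{f=1}^{s} [1 - ((k-1)/k)^f] · C(s,f) · σ^f · (1-σ)^(s-f)`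
with `σ = 1 - ((n-k)/n)^d`. -/
theorem stmt6 (n d k s : ℕ) (hn : 1 ≤ n) (hk : 1 ≤ k)
    (S : Finset (Fin n)) (hS : S.card = k) :
    expectedHappy n d s S
      = (k : ℝ) * ∑ f ∈ Finset.Icc 1 s,
          (1 - (((k : ℝ) - 1) / (k : ℝ)) ^ f) * (s.choose f : ℝ) *
            (1 - (((n : ℝ) - (k : ℝ)) / (n : ℝ)) ^ d) ^ f *
            (1 - (1 - (((n : ℝ) - (k : ℝ)) / (n : ℝ)) ^ d)) ^ (s - f) := by
  have hkn : k ≤ n := by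
    rw [← hS]
    simpa using Finset.card_le_card (Finset.subset_univ S)
  have hn0 : (n:ℝ) ≠ 0 := by positivity
  have hk0 : (k:ℝ) ≠ 0 := by positivity
  have hnd : ((n:ℝ)^d) ≠ 0 := by positivity
  set σ : ℝ := 1 - (((n : ℝ) - (k : ℝ)) / (n : ℝ)) ^ d with hσ
  set r : ℝ := ((k : ℝ) - 1) / (k : ℝ) with hr
  -- cast of n - k
  have hcast : ((n - k : ℕ) : ℝ) = (n:ℝ) - (k:ℝ) := by
    push_cast [hkn]; ring
  -- value of q
  have hq : ∀ j ∈ S, ∑ g : Fin d → Fin n, selProb S j g = (n:ℝ)^d * σ / k := by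
    intro j hj
    rw [sum_selProb_val n d k hk S hS hj, hcast, hσ, div_pow]
    field_simp
  -- rewrite expectedHappy
  have hEH : expectedHappy n d s S
      = (∑ G : Fin s → Fin d → Fin n, ∑ j ∈ S,
          (1 - ∏ i : Fin s, (1 - selProb S j (G i)))) / ((n : ℝ) ^ d) ^ s := rfl
  rw [hEH, Finset.sum_comm]
  have hinner : ∀ j ∈ S,
      ∑ G : Fin s → Fin d → Fin n, (1 - ∏ i : Fin s, (1 - selProb S j (G i)))
        = ((n:ℝ)^d)^s - ((n:ℝ)^d - (n:ℝ)^d * σ / k)^s := by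
    intro j hj
    rw [Finset.sum_sub_distrib]
    congr 1
    · rw [Finset.sum_const, nsmul_eq_mul, mul_one]
      simp [Fintype.card_fun]
    · rw [← Fintype.sum_pow (fun g => 1 - selProb S j g) s, Finset.sum_sub_distrib,
        Finset.sum_const, nsmul_eq_mul, mul_one, hq j hj]
      simp [Fintype.card_fun]
  rw [Finset.sum_congr rfl hinner, Finset.sum_const, hS, nsmul_eq_mul]
  rw [binom_id σ r s]
  have key : ((n:ℝ)^d)^s - ((n:ℝ)^d - (n:ℝ)^d * σ / k)^s
      = ((n:ℝ)^d)^s * (1 - (r * σ + (1 - σ))^s) := by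
    have h1 : (n:ℝ)^d - (n:ℝ)^d * σ / k = (n:ℝ)^d * (r * σ + (1 - σ)) := by
      rw [hr]; field_simp; ring
    rw [h1, mul_pow]; ring
  rw [key]
  field_simp
end

section
/- (Corollary 2, monotonicity of the expected number of happy agents in the number of available bins) Fix natural numbers n ≥ 1, d ≥ 1, and s ≥ 1. For an integer k with 1 ≤ k ≤ n, let σ(k) = 1 - ((n-k)/n)^d and define E(k) = k · Σ_{f=1}^{s} [1 - ((k-1)/k)^f] · C(s, f) · σ(k)^f · (1 - σ(k))^{s-f}. Then E(k) is monotone non-decreasing in k: for every k with 1 ≤ k < n, E(k+1) ≥ E(k). Consequently, if a configuration of s schedulers each querying d hosts guarantees an expected decline ratio at most r when exactly k bins are available, the same guarantee holds whenever k is merely a lower bound on the number of available bins. -/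
open Finset

/-- `σ(k) = 1 - ((n-k)/n)^d`: the probability that an agent querying `d` of `n`
bins uniformly at random is potentially happy when `k` bins are available. -/
noncomputable def sigmaProb (n d k : ℕ) : ℝ :=
  1 - (((n : ℝ) - (k : ℝ)) / (n : ℝ)) ^ d

/-- `E(k) = k · Σ_{f=1}^{s} [1 - ((k-1)/k)^f] · C(s,f) · σ(k)^f · (1-σ(k))^(s-f)`:
the expected number of happy agents in the balls-and-bins model with `n` bins of
which `k` are available, `s` agents each querying `d` bins. -/
noncomputable def expectedHappyCount (n d s k : ℕ) : ℝ :=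
  (k : ℝ) * ∑ f ∈ Finset.Icc 1 s,
    (1 - (((k : ℝ) - 1) / (k : ℝ)) ^ f) * (s.choose f : ℝ) *
      (sigmaProb n d k) ^ f * (1 - sigmaProb n d k) ^ (s - f)

/-! The term `f = 0` of the sum defining `E(k)` vanishes, so the binomial theorem collapses it to
`E(k) = k (1 - (1 - σ(k)/k)^s)`. Since `K (1 - (1 - σ/K)^s) = σ ∑_{i<s} (1 - σ/K)^i`, this expression
is non-decreasing in `K` for fixed `0 ≤ σ ≤ K`, and it is non-decreasing in `σ ≤ K` for fixed `K`.
As `σ(k)` itself grows with `k`, `E(k) ≤ E(k')` whenever `1 ≤ k ≤ k' ≤ n`. -/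

theorem sum_Icc_one_binomial_one_sub_pow (s : ℕ) (σ t : ℝ) :
    ∑ f ∈ Icc 1 s, (1 - t ^ f) * (s.choose f : ℝ) * σ ^ f * (1 - σ) ^ (s - f)
      = 1 - (σ * t + (1 - σ)) ^ s := by
  calc ∑ f ∈ Icc 1 s, (1 - t ^ f) * (s.choose f : ℝ) * σ ^ f * (1 - σ) ^ (s - f)
      = ∑ f ∈ range (s + 1), (1 - t ^ f) * (s.choose f : ℝ) * σ ^ f * (1 - σ) ^ (s - f) := by
        rw [range_eq_Ico, sum_eq_sum_Ico_succ_bot s.succ_pos, zero_add, Nat.succ_eq_add_one,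
          Ico_add_one_right_eq_Icc]
        simp
    _ = ∑ f ∈ range (s + 1), σ ^ f * (1 - σ) ^ (s - f) * (s.choose f : ℝ)
        - ∑ f ∈ range (s + 1), (σ * t) ^ f * (1 - σ) ^ (s - f) * (s.choose f : ℝ) := by
        rw [← sum_sub_distrib]
        exact sum_congr rfl fun f _ => by ring
    _ = (σ + (1 - σ)) ^ s - (σ * t + (1 - σ)) ^ s := by rw [add_pow, add_pow]
    _ = 1 - (σ * t + (1 - σ)) ^ s := by ring

theorem mul_one_sub_one_sub_div_pow_eq {K : ℝ} (hK : K ≠ 0) (σ : ℝ) (s : ℕ) :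
    K * (1 - (1 - σ / K) ^ s) = σ * ∑ i ∈ range s, (1 - σ / K) ^ i := by
  rw [← mul_neg_geom_sum, sub_sub_cancel, ← mul_assoc, mul_div_cancel₀ _ hK]

theorem mul_one_sub_one_sub_div_pow_mono_left {σ K K' : ℝ} (s : ℕ) (hσ : 0 ≤ σ) (hσK : σ ≤ K)
    (hKK' : K ≤ K') :
    K * (1 - (1 - σ / K) ^ s) ≤ K' * (1 - (1 - σ / K') ^ s) := by
  rcases hσ.eq_or_lt with rfl | hσ₀
  · simp
  have hK : 0 < K := hσ₀.trans_le hσK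
  rw [mul_one_sub_one_sub_div_pow_eq hK.ne', mul_one_sub_one_sub_div_pow_eq (hK.trans_le hKK').ne']
  have : 0 ≤ 1 - σ / K := sub_nonneg.2 ((div_le_one hK).2 hσK)
  gcongr

theorem mul_one_sub_one_sub_div_pow_mono_right {σ σ' K : ℝ} (s : ℕ) (hK : 0 < K)
    (hσσ' : σ ≤ σ') (hσ'K : σ' ≤ K) :
    K * (1 - (1 - σ / K) ^ s) ≤ K * (1 - (1 - σ' / K) ^ s) := by
  have : 0 ≤ 1 - σ' / K := sub_nonneg.2 ((div_le_one hK).2 hσ'K)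
  gcongr

theorem sigmaProb_mono {n d k k' : ℕ} (hkk' : k ≤ k') (hk'n : k' ≤ n) :
    sigmaProb n d k ≤ sigmaProb n d k' := by
  have : (k' : ℝ) ≤ n := by exact_mod_cast hk'n
  unfold sigmaProb
  gcongr

theorem sigmaProb_nonneg {n d k : ℕ} (hkn : k ≤ n) : 0 ≤ sigmaProb n d k :=
  have : (k : ℝ) ≤ n := by exact_mod_cast hkn
  sub_nonneg.2 (pow_le_one₀ (div_nonneg (by linarith) n.cast_nonneg)
    (div_le_one_of_le₀ (by simp) n.cast_nonneg))

theorem sigmaProb_le_one {n d k : ℕ} (hkn : k ≤ n) : sigmaProb n d k ≤ 1 :=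
  have : (k : ℝ) ≤ n := by exact_mod_cast hkn
  sub_le_self _ (pow_nonneg (div_nonneg (by linarith) n.cast_nonneg) d)

theorem expectedHappyCount_eq {k : ℕ} (hk : k ≠ 0) (n d s : ℕ) :
    expectedHappyCount n d s k = k * (1 - (1 - sigmaProb n d k / k) ^ s) := by
  rw [expectedHappyCount, sum_Icc_one_binomial_one_sub_pow]
  congr 3
  field_simp
  ring

theorem expectedHappyCount_mono {n d s k k' : ℕ} (hk : 1 ≤ k) (hkk' : k ≤ k') (hk'n : k' ≤ n) :
    expectedHappyCount n d s k ≤ expectedHappyCount n d s k' := by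
  have hk₁ : (1 : ℝ) ≤ k := by exact_mod_cast hk
  have hkk'₁ : (k : ℝ) ≤ k' := by exact_mod_cast hkk'
  rw [expectedHappyCount_eq (by omega), expectedHappyCount_eq (by omega)]
  calc (k : ℝ) * (1 - (1 - sigmaProb n d k / k) ^ s)
      ≤ k' * (1 - (1 - sigmaProb n d k / k') ^ s) :=
        mul_one_sub_one_sub_div_pow_mono_left s (sigmaProb_nonneg (hkk'.trans hk'n))
          ((sigmaProb_le_one (hkk'.trans hk'n)).trans hk₁) hkk'₁
    _ ≤ k' * (1 - (1 - sigmaProb n d k' / k') ^ s) :=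
        mul_one_sub_one_sub_div_pow_mono_right s (by linarith) (sigmaProb_mono hkk' hk'n)
          ((sigmaProb_le_one hk'n).trans (hk₁.trans hkk'₁))

theorem stmt11_general (n d s : ℕ) :
    (∀ k : ℕ, 1 ≤ k → k < n →
      expectedHappyCount n d s (k + 1) ≥ expectedHappyCount n d s k) ∧
    (∀ (r : ℝ) (k k' : ℕ), 1 ≤ k → k ≤ k' → k' ≤ n →
      expectedHappyCount n d s k ≥ (s : ℝ) * (1 - r) →
      expectedHappyCount n d s k' ≥ (s : ℝ) * (1 - r)) :=
  ⟨fun _ hk hkn => expectedHappyCount_mono hk (Nat.le_succ _) hkn,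
    fun _ _ _ hk hkk' hk'n hE => hE.trans (expectedHappyCount_mono hk hkk' hk'n)⟩

/-- Corollary 2: `E(k)` is monotone non-decreasing in the number
`k` of available bins: `E(k+1) ≥ E(k)` for `1 ≤ k < n`.  Consequently, if a
configuration of `s` schedulers each querying `d` hosts guarantees an expected
decline ratio at most `r` (i.e. `E(k) ≥ s·(1-r)`) when exactly `k` bins are
available, the same guarantee holds whenever `k` is merely a lower bound on the
number of available bins. -/
theorem stmt11 (n d s : ℕ) (hn : 1 ≤ n) (hd : 1 ≤ d) (hs : 1 ≤ s) :
    (∀ k : ℕ, 1 ≤ k → k < n →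
      expectedHappyCount n d s (k + 1) ≥ expectedHappyCount n d s k) ∧
    (∀ (r : ℝ) (k k' : ℕ), 1 ≤ k → k ≤ k' → k' ≤ n →
      expectedHappyCount n d s k ≥ (s : ℝ) * (1 - r) →
      expectedHappyCount n d s k' ≥ (s : ℝ) * (1 - r)) :=
  stmt11_general n d s
end
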